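/- arXiv:2106.05381 — 2 statements merged into one kernel-verified Lean document; each statement's English description precedes it below -/
import Mathlib

section
/- Let H be a normal subgroup of prime index r in a group G, with G/H cyclic generated by the image of σ. Let ρ' be a finite-dimensional irreducible complex representation of H. Then ρ' extends to a representation of G if and only if ρ' ≅ ρ'^σ; and in that case there are exactly r isomorphism classes of extensions, any two of which differ by twisting with a character of G/H. -/
/-!
If `ρ` extends `ρ'`, then `ρ σ` intertwines `ρ'` with `ρ'^σ`. Conversely, an intertwiner `E`
can be rescaled so that `E ^ r = ρ' (σ ^ r)`: by Schur's lemma `ρ' (σ ^ r)⁻¹ * E ^ r` is a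
scalar, and dividing `E` by an `r`-th root of it does the job. Then `h * σ ^ n ↦ ρ' h * E ^ n`
is well defined on `G`, a quotient of `H ⋊ ℤ`. Two extensions differ at `σ` by a scalar `c`
(Schur again) with `c ^ r = 1`, so one is the twist of the other by the character of `G ⧸ H`
sending `σ` to `c`. The twists of one extension by the `r` characters of `G ⧸ H` are pairwise
non-isomorphic, since an isomorphism between two of them commutes with `ρ'` and is therefore a
scalar.
-/

theorem QuotientGroup.pow_orderOf_mk_mem {G : Type*} [Group G] (H : Subgroup G) [H.Normal] (σ : G) :
    σ ^ orderOf (σ : G ⧸ H) ∈ H := by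
  rw [← QuotientGroup.eq_one_iff, QuotientGroup.mk_pow, pow_orderOf_eq_one]

theorem Subgroup.orderOf_mk_eq_index {G : Type*} [Group G] {H : Subgroup G} [H.Normal] {σ : G}
    (hgen : ∀ g : G, ∃ (m : ℕ) (h : G), h ∈ H ∧ g = σ ^ m * h) :
    orderOf (σ : G ⧸ H) = H.index := by
  rw [H.index_eq_card]
  refine orderOf_eq_card_of_forall_mem_zpowers fun x ↦ ?_
  induction x using QuotientGroup.induction_on with | H g => ?_
  obtain ⟨m, h, hh, rfl⟩ := hgen g
  refine ⟨m, ?_⟩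
  simp [(QuotientGroup.eq_one_iff h).mpr hh]

namespace MonoidHom

variable {G M : Type*} [Group G] [Group M] {H : Subgroup G} {σ : G}

theorem eq_of_forall_mem_of_apply_eq {N : Type*} [Monoid N]
    (hgen : ∀ g : G, ∃ (m : ℕ) (h : G), h ∈ H ∧ g = σ ^ m * h)
    {φ ψ : G →* N} (hH : ∀ h ∈ H, φ h = ψ h) (hσ : φ σ = ψ σ) : φ = ψ := by
  ext g
  obtain ⟨m, h, hh, rfl⟩ := hgen g
  simp only [map_mul, map_pow, hσ, hH h hh]

variable [H.Normal]

theorem map_conjNormal_zpow (f : H →* M) {F : M}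
    (hF : ∀ h, f (MulAut.conjNormal σ h) = F * f h * F⁻¹) (n : ℤ) (h : H) :
    f (MulAut.conjNormal (σ ^ n) h) = F ^ n * f h * (F ^ n)⁻¹ := by
  induction n using Int.induction_on generalizing h with
  | zero => simp
  | succ n ih =>
    rw [zpow_add_one, map_mul, MulAut.mul_apply, ih, hF, zpow_add_one]
    group
  | pred n ih =>
    have hσ : f (MulAut.conjNormal σ⁻¹ h) = F⁻¹ * f h * F := by
      have := hF (MulAut.conjNormal σ⁻¹ h)
      rw [← MulAut.mul_apply, ← map_mul, mul_inv_cancel, map_one, MulAut.one_apply] at this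
      rw [this]; group
    rw [zpow_sub_one, map_mul, MulAut.mul_apply, ih, hσ, zpow_sub_one]
    group

theorem exists_extension_of_conjNormal (hgen : ∀ g : G, ∃ (m : ℕ) (h : G), h ∈ H ∧ g = σ ^ m * h)
    (f : H →* M) (F : M) (hF : ∀ h, f (MulAut.conjNormal σ h) = F * f h * F⁻¹)
    (hFr : ∀ s : H, (s : G) = σ ^ orderOf (σ : G ⧸ H) → f s = F ^ orderOf (σ : G ⧸ H)) :
    ∃ ψ : G →* M, (∀ h : H, ψ h = f h) ∧ ψ σ = F := by
  set r := orderOf (σ : G ⧸ H)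
  let φ : Multiplicative ℤ →* MulAut H := MulAut.conjNormal.comp (zpowersHom G σ)
  -- `G` is the quotient of `H ⋊ ℤ` by the normal subgroup generated by `(σ ^ (-r), r)`
  let π : H ⋊[φ] Multiplicative ℤ →* G :=
    SemidirectProduct.lift H.subtype (zpowersHom G σ) fun n ↦ by
      ext h
      simp only [MonoidHom.comp_apply, MulEquiv.coe_toMonoidHom, φ, zpowersHom_apply,
        Subgroup.coe_subtype, MulAut.conj_apply, MulAut.conjNormal_apply]
  let ψ₀ : H ⋊[φ] Multiplicative ℤ →* M :=
    SemidirectProduct.lift f (zpowersHom M F) fun n ↦ by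
      ext h
      simp only [MonoidHom.comp_apply, MulEquiv.coe_toMonoidHom, φ, zpowersHom_apply,
        MulAut.conj_apply, map_conjNormal_zpow f hF]
  have hπ : Function.Surjective π := by
    intro g
    obtain ⟨m, h, hh, rfl⟩ := hgen g
    refine ⟨⟨MulAut.conjNormal (σ ^ m) ⟨h, hh⟩, .ofAdd m⟩, ?_⟩
    rw [SemidirectProduct.mk_eq_inl_mul_inr, map_mul, SemidirectProduct.lift_inl,
      SemidirectProduct.lift_inr]
    simp only [Subgroup.coe_subtype, zpowersHom_apply, toAdd_ofAdd, zpow_natCast,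
      MulAut.conjNormal_apply, inv_mul_cancel_right]
  have hker : π.ker ≤ ψ₀.ker := by
    rintro ⟨h, n⟩ hn
    have hhn : (h : G) * σ ^ n.toAdd = 1 := by simpa [π] using hn
    obtain ⟨k, hk⟩ : (r : ℤ) ∣ n.toAdd := by
      rw [orderOf_dvd_iff_zpow_eq_one, ← QuotientGroup.mk_zpow, QuotientGroup.eq_one_iff,
        ← inv_mem_iff, show (σ ^ n.toAdd)⁻¹ = (h : G) from (eq_inv_of_mul_eq_one_left hhn).symm]
      exact h.2
    have hs := QuotientGroup.pow_orderOf_mk_mem H σ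
    have hh : h = (⟨σ ^ r, hs⟩ : H) ^ (-k) := by
      ext; simp [eq_inv_of_mul_eq_one_left hhn, hk, zpow_mul]
    simp [ψ₀, hh, hk, hFr ⟨σ ^ r, hs⟩ rfl, zpow_mul]
  refine ⟨π.liftOfSurjective hπ ⟨ψ₀, hker⟩, fun h ↦ ?_, ?_⟩
  · simpa [π, ψ₀] using π.liftOfRightInverse_comp_apply _ _ ⟨ψ₀, hker⟩ (.inl h)
  · simpa [π, ψ₀] using π.liftOfRightInverse_comp_apply _ _ ⟨ψ₀, hker⟩ (.inr (.ofAdd 1))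

theorem exists_le_ker_apply_eq_of_pow_eq_one {M : Type*} [CommGroup M]
    (hgen : ∀ g : G, ∃ (m : ℕ) (h : G), h ∈ H ∧ g = σ ^ m * h)
    {z : M} (hz : z ^ orderOf (σ : G ⧸ H) = 1) : ∃ χ : G →* M, H ≤ χ.ker ∧ χ σ = z := by
  obtain ⟨χ, hχH, hχσ⟩ := exists_extension_of_conjNormal hgen 1 z (fun _ ↦ by simp)
    fun _ _ ↦ by simp [hz]
  exact ⟨χ, fun h hh ↦ hχH ⟨h, hh⟩, hχσ⟩

theorem exists_enumeration_of_le_ker {k : Type*} [Field k]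
    (hgen : ∀ g : G, ∃ (m : ℕ) (h : G), h ∈ H ∧ g = σ ^ m * h)
    (hr : orderOf (σ : G ⧸ H) ≠ 0) {ζ : kˣ} (hζ : IsPrimitiveRoot ζ (orderOf (σ : G ⧸ H))) :
    ∃ χ : Fin (orderOf (σ : G ⧸ H)) → G →* kˣ, (∀ i, H ≤ (χ i).ker) ∧ Function.Injective χ ∧
      ∀ χ' : G →* kˣ, H ≤ χ'.ker → ∃ i, χ i = χ' := by
  set r := orderOf (σ : G ⧸ H)
  have : NeZero r := ⟨hr⟩
  choose χ hχH hχσ using fun i : Fin r ↦ exists_le_ker_apply_eq_of_pow_eq_one hgen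
    (z := ζ ^ (i : ℕ)) (by rw [← pow_mul, mul_comm, pow_mul, hζ.pow_eq_one, one_pow])
  refine ⟨χ, hχH, fun i j hij ↦ Fin.ext (hζ.pow_inj i.2 j.2 ?_), fun χ' hχ' ↦ ?_⟩
  · rw [← hχσ i, ← hχσ j, hij]
  obtain ⟨i, hi, hiσ⟩ := (IsPrimitiveRoot.coe_units_iff.mpr hζ).eq_pow_of_pow_eq_one
    (ξ := (χ' σ : k)) (by
      rw [← Units.val_pow_eq_pow_val, ← map_pow,
        MonoidHom.mem_ker.mp (hχ' (QuotientGroup.pow_orderOf_mk_mem H σ)), Units.val_one])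
  refine ⟨⟨i, hi⟩, eq_of_forall_mem_of_apply_eq hgen (fun h hh ↦ ?_) ?_⟩
  · rw [MonoidHom.mem_ker.mp (hχH _ hh), MonoidHom.mem_ker.mp (hχ' hh)]
  · rw [hχσ]
    exact Units.ext (by simpa using hiσ)

theorem commute_inv_mul_pow (f : H →* M) {F : M}
    (hF : ∀ h, f (MulAut.conjNormal σ h) = F * f h * F⁻¹) {r : ℕ} (s : H) (hs : (s : G) = σ ^ r)
    (h : H) : Commute ((f s)⁻¹ * F ^ r) (f h) := by
  have hconj : MulAut.conjNormal (σ ^ (r : ℤ)) h = s * h * s⁻¹ := by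
    ext
    simp only [MulAut.conjNormal_apply, zpow_natCast, Subgroup.coe_mul, Subgroup.coe_inv, hs]
  have := map_conjNormal_zpow f hF r h
  rw [hconj, map_mul, map_mul, map_inv, zpow_natCast] at this
  rw [commute_iff_eq, mul_assoc, show F ^ r * f h = f s * f h * (f s)⁻¹ * F ^ r by
    rw [this]; group]
  group

theorem exists_conj_eq_pow_eq_of_mem_center (f : H →* M) {F : M}
    (hF : ∀ h, f (MulAut.conjNormal σ h) = F * f h * F⁻¹) {r : ℕ} {t Λ : M}
    (hΛ : Λ ∈ Subgroup.center M) (hFr : F ^ r = t * Λ ^ r) :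
    ∃ F' : M, (∀ h, f (MulAut.conjNormal σ h) = F' * f h * F'⁻¹) ∧ t = F' ^ r := by
  have hcomm : ∀ x : M, Commute x Λ := fun x ↦ Subgroup.mem_center_iff.mp hΛ x
  refine ⟨F * Λ⁻¹, fun h ↦ ?_, ?_⟩
  · rw [hF, mul_inv_rev, inv_inv, mul_assoc (F * Λ⁻¹), ← mul_assoc (f h), (hcomm (f h)).eq]
    group
  · rw [(hcomm F).inv_right.mul_pow, hFr, inv_pow, mul_inv_cancel_right]

end MonoidHom

theorem LinearEquiv.conj_eq_mul {k V : Type*} [CommSemiring k] [AddCommMonoid V] [Module k V]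
    (e : V ≃ₗ[k] V) (x : Module.End k V) :
    e.conj x = e.toLinearMap * x * e.symm.toLinearMap := by
  rw [LinearEquiv.conj_apply]; rfl

namespace Representation

open LinearMap.GeneralLinearGroup

variable {k G V : Type*} [Field k] [AddCommGroup V] [Module k V]

section Irreducible

variable [Monoid G] [IsAlgClosed k] [FiniteDimensional k V] [Nontrivial V]
  {ρ : Representation k G V}

theorem exists_eq_smul_one_of_commute
    (hirr : ∀ p : Submodule k V, (∀ g : G, ∀ v ∈ p, ρ g v ∈ p) → p = ⊥ ∨ p = ⊤)
    {T : Module.End k V} (hT : ∀ g, Commute T (ρ g)) : ∃ c : k, T = c • 1 := by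
  obtain ⟨c, hc⟩ := T.exists_eigenvalue
  refine ⟨c, ?_⟩
  obtain hbot | htop := hirr (T.eigenspace c) fun g v hv ↦
    Module.End.mapsTo_genEigenspace_of_comm (hT g) c 1 hv
  · exact absurd hbot hc
  · ext v
    have hv : v ∈ T.eigenspace c := htop ▸ Submodule.mem_top
    simpa [Module.End.mem_eigenspace_iff] using hv

theorem conj_eq_self_of_forall_conj_eq
    (hirr : ∀ p : Submodule k V, (∀ g : G, ∀ v ∈ p, ρ g v ∈ p) → p = ⊥ ∨ p = ⊤)
    {e : V ≃ₗ[k] V} (he : ∀ g, e.conj (ρ g) = ρ g) (x : Module.End k V) : e.conj x = x := by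
  obtain ⟨c, hc⟩ := exists_eq_smul_one_of_commute hirr (T := e.toLinearMap) fun g ↦ by
    rw [commute_iff_eq]
    conv_rhs => rw [← he g, LinearEquiv.conj_eq_mul]
    ext v; simp
  have hcomm : e.toLinearMap * x = x * e.toLinearMap := by
    rw [hc, smul_mul_assoc, mul_smul_comm, one_mul, mul_one]
  rw [LinearEquiv.conj_eq_mul, hcomm, mul_assoc]
  ext v; simp

end Irreducible

section Group

variable [Group G]

theorem apply_ne_zero [Nontrivial V] (ρ : Representation k G V) (g : G) : ρ g ≠ 0 := by
  rw [← ρ.asGroupHom_apply]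
  exact Units.ne_zero _

theorem conj_toLinearEquiv_asGroupHom (ρ : Representation k G V) (g x : G) :
    (toLinearEquiv (ρ.asGroupHom g)).conj (ρ x) = ρ (g * x * g⁻¹) := by
  rw [LinearEquiv.conj_eq_mul, map_mul, map_mul]
  rfl

def twist (ρ : Representation k G V) (χ : G →* kˣ) : Representation k G V where
  toFun g := (χ g : k) • ρ g
  map_one' := by simp
  map_mul' g₁ g₂ := by simp only [map_mul, Units.val_mul, smul_mul_smul_comm]

@[simp]
theorem twist_apply (ρ : Representation k G V) (χ : G →* kˣ) (g : G) :
    ρ.twist χ g = (χ g : k) • ρ g :=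
  rfl

theorem apply_eq_of_twist_apply_eq [Nontrivial V] {ρ : Representation k G V} {χ χ' : G →* kˣ}
    {g : G} (h : ρ.twist χ g = ρ.twist χ' g) : χ g = χ' g :=
  Units.ext (smul_left_injective k (ρ.apply_ne_zero g) h)

variable {H : Subgroup G} [H.Normal] {σ : G} {ρ' : Representation k H V}

theorem exists_eq_twist_of_restrict_eq [IsAlgClosed k] [FiniteDimensional k V] [Nontrivial V]
    (hgen : ∀ g : G, ∃ (m : ℕ) (h : G), h ∈ H ∧ g = σ ^ m * h)
    (hirr : ∀ p : Submodule k V, (∀ h : H, ∀ v ∈ p, ρ' h v ∈ p) → p = ⊥ ∨ p = ⊤)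
    {ρ τ : Representation k G V} (hρ : ∀ h : H, ρ h = ρ' h) (hτ : ∀ h : H, τ h = ρ' h) :
    ∃ χ : G →* kˣ, H ≤ χ.ker ∧ τ = ρ.twist χ := by
  have hτρ : ∀ x ∈ H, τ x = ρ x := fun x hx ↦ (hτ ⟨x, hx⟩).trans (hρ ⟨x, hx⟩).symm
  obtain ⟨c, hc⟩ := exists_eq_smul_one_of_commute hirr (T := ρ σ⁻¹ * τ σ) fun h ↦ by
    have hmem : σ * h * σ⁻¹ ∈ H := ‹H.Normal›.conj_mem h h.2 σ
    calc ρ σ⁻¹ * τ σ * ρ' h = ρ σ⁻¹ * τ (σ * h * σ⁻¹ * σ) := by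
          rw [← hτ, mul_assoc, ← map_mul, inv_mul_cancel_right]
      _ = ρ σ⁻¹ * ρ (σ * h * σ⁻¹) * τ σ := by rw [map_mul τ, hτρ _ hmem, ← mul_assoc]
      _ = ρ' h * (ρ σ⁻¹ * τ σ) := by
          rw [← map_mul, show σ⁻¹ * (σ * h * σ⁻¹) = h * σ⁻¹ by group, map_mul, hρ, mul_assoc]
  have hτσ : τ σ = c • ρ σ := by
    calc τ σ = ρ σ * (ρ σ⁻¹ * τ σ) := by
          rw [← mul_assoc, ← map_mul, mul_inv_cancel, map_one, one_mul]
      _ = c • ρ σ := by rw [hc, mul_smul_comm, mul_one]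
  have hc0 : c ≠ 0 := by
    rintro rfl
    exact τ.apply_ne_zero σ (by rw [hτσ, zero_smul])
  have hcr : Units.mk0 c hc0 ^ orderOf (σ : G ⧸ H) = 1 := by
    have hσr := QuotientGroup.pow_orderOf_mk_mem H σ
    refine Units.ext (smul_left_injective k (ρ.apply_ne_zero (σ ^ orderOf (σ : G ⧸ H))) ?_)
    simp only [Units.val_pow_eq_pow_val, Units.val_mk0, Units.val_one, one_smul]
    rw [map_pow, ← smul_pow, ← hτσ, ← map_pow, hτρ _ hσr, map_pow]
  obtain ⟨χ, hχH, hχσ⟩ := MonoidHom.exists_le_ker_apply_eq_of_pow_eq_one hgen hcr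
  refine ⟨χ, hχH, MonoidHom.eq_of_forall_mem_of_apply_eq hgen (fun h hh ↦ ?_) ?_⟩
  · rw [twist_apply, MonoidHom.mem_ker.mp (hχH hh), Units.val_one, one_smul, hτρ h hh]
  · rw [twist_apply, hχσ, Units.val_mk0, hτσ]

theorem exists_extension_of_conj [IsAlgClosed k] [FiniteDimensional k V] [Nontrivial V]
    (hgen : ∀ g : G, ∃ (m : ℕ) (h : G), h ∈ H ∧ g = σ ^ m * h)
    (hr : orderOf (σ : G ⧸ H) ≠ 0)
    (hirr : ∀ p : Submodule k V, (∀ h : H, ∀ v ∈ p, ρ' h v ∈ p) → p = ⊥ ∨ p = ⊤)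
    {e : V ≃ₗ[k] V} (he : ∀ h, e.conj (ρ' h) = ρ' (MulAut.conjNormal σ h)) :
    ∃ ρ : Representation k G V, ∀ h : H, ρ h = ρ' h := by
  set r := orderOf (σ : G ⧸ H)
  set U := ρ'.asGroupHom
  set E := ofLinearEquiv e
  let s : H := ⟨σ ^ r, QuotientGroup.pow_orderOf_mk_mem H σ⟩
  have hE : ∀ h, U (MulAut.conjNormal σ h) = E * U h * E⁻¹ := fun h ↦ by
    ext1
    rw [asGroupHom_apply, ← he, LinearEquiv.conj_eq_mul]
    rfl
  -- `E ^ r` and `ρ' (σ ^ r)` both conjugate `ρ'` into `ρ'^(σ ^ r)`, so they differ by a scalar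
  obtain ⟨c, hc⟩ := exists_eq_smul_one_of_commute hirr (T := ↑((U s)⁻¹ * E ^ r)) fun h ↦
    (MonoidHom.commute_inv_mul_pow U hE s rfl h).units_val
  have hc0 : c ≠ 0 := by
    rintro rfl
    exact Units.ne_zero _ (hc.trans (zero_smul _ _))
  obtain ⟨a, ha⟩ := IsAlgClosed.exists_pow_nat_eq c (Nat.pos_of_ne_zero hr)
  have ha0 : a ≠ 0 := by
    rintro rfl
    exact hc0 (ha.symm.trans (zero_pow hr))
  let Λ : (Module.End k V)ˣ := Units.map (algebraMap k (Module.End k V)) (Units.mk0 a ha0)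
  have hΛ : Λ ∈ Subgroup.center _ :=
    Subgroup.mem_center_iff.mpr fun x ↦ Units.ext (Algebra.commutes _ _).symm
  have hEr : E ^ r = U s * Λ ^ r := by
    rw [← inv_mul_eq_iff_eq_mul]
    ext1
    rw [hc, Units.val_pow_eq_pow_val]
    simp [Λ, Algebra.algebraMap_eq_smul_one, smul_pow, ha]
  obtain ⟨F, hF, hFr⟩ := MonoidHom.exists_conj_eq_pow_eq_of_mem_center U hE hΛ hEr
  obtain ⟨ψ, hψ, -⟩ := MonoidHom.exists_extension_of_conjNormal hgen U F hF fun t ht ↦ by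
    rw [show t = s from Subtype.ext ht, hFr]
  exact ⟨(Units.coeHom _).comp ψ, fun h ↦ by simp [hψ, U, asGroupHom_apply]⟩

end Group

end Representation

/-- Extension criterion for irreducible representations across a normal subgroup of prime index.
Let `H ⊴ G` with `G/H` cyclic of prime order `r`, generated by the image of `σ`, and let `ρ'` be
a finite-dimensional irreducible complex representation of `H`.  Then:
(1) `ρ'` extends to a representation of `G` iff `ρ' ≅ ρ'^σ`, where `ρ'^σ(h) = ρ'(σhσ⁻¹)`;
(2) in that case there are exactly `r` isomorphism classes of extensions, every extension is
isomorphic to one of them, and any two extensions differ by a twist with a character of `G/H`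
(a character of `G` trivial on `H`). -/
theorem extension_of_irreducible_from_prime_index_normal_subgroup
    {G : Type*} [Group G] (H : Subgroup G) [H.Normal] (r : ℕ) (hr : r.Prime)
    (hindex : H.index = r) (σ : G)
    (hgen : ∀ g : G, ∃ (m : ℕ) (h : G), h ∈ H ∧ g = σ ^ m * h)
    {V : Type*} [AddCommGroup V] [Module ℂ V] [FiniteDimensional ℂ V] [Nontrivial V]
    (ρ' : Representation ℂ H V)
    (hirr : ∀ p : Submodule ℂ V, (∀ h : H, ∀ v ∈ p, ρ' h v ∈ p) → p = ⊥ ∨ p = ⊤) :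
    ((∃ ρ : Representation ℂ G V, ∀ h : H, ρ (h : G) = ρ' h) ↔
      (∃ e : V ≃ₗ[ℂ] V, ∀ h : H, e.conj (ρ' h) = ρ' (MulAut.conjNormal σ h))) ∧
    ((∃ e : V ≃ₗ[ℂ] V, ∀ h : H, e.conj (ρ' h) = ρ' (MulAut.conjNormal σ h)) →
      ∃ ρs : Fin r → Representation ℂ G V,
        (∀ i, ∀ h : H, (ρs i) (h : G) = ρ' h) ∧
        (∀ i j, i ≠ j → ¬ ∃ e : V ≃ₗ[ℂ] V, ∀ g : G, (ρs j) g = e.conj ((ρs i) g)) ∧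
        (∀ ρ : Representation ℂ G V, (∀ h : H, ρ (h : G) = ρ' h) →
          ∃ i, ∃ e : V ≃ₗ[ℂ] V, ∀ g : G, ρ g = e.conj ((ρs i) g)) ∧
        (∀ ρ τ : Representation ℂ G V, (∀ h : H, ρ (h : G) = ρ' h) →
          (∀ h : H, τ (h : G) = ρ' h) →
          ∃ χ : G →* ℂˣ, (∀ h ∈ H, χ h = 1) ∧
            ∃ e : V ≃ₗ[ℂ] V, ∀ g : G, τ g = (χ g : ℂ) • e.conj (ρ g))) := by
  obtain rfl : orderOf (σ : G ⧸ H) = r := (Subgroup.orderOf_mk_eq_index hgen).trans hindex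
  have hextends : (∃ ρ : Representation ℂ G V, ∀ h : H, ρ (h : G) = ρ' h) ↔
      (∃ e : V ≃ₗ[ℂ] V, ∀ h : H, e.conj (ρ' h) = ρ' (MulAut.conjNormal σ h)) :=
    ⟨fun ⟨ρ, hρ⟩ ↦ ⟨_, fun h ↦ by
        rw [← hρ, Representation.conj_toLinearEquiv_asGroupHom, ← hρ, MulAut.conjNormal_apply]⟩,
      fun ⟨_, he⟩ ↦ Representation.exists_extension_of_conj hgen hr.ne_zero hirr he⟩
  refine ⟨hextends, fun he ↦ ?_⟩
  obtain ⟨ρ₀, hρ₀⟩ := hextends.2 he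
  have hζ := Complex.isPrimitiveRoot_exp _ hr.ne_zero
  obtain ⟨χ, hχH, hχinj, hχall⟩ := MonoidHom.exists_enumeration_of_le_ker hgen hr.ne_zero
    (ζ := (hζ.isUnit hr.ne_zero).unit) (IsPrimitiveRoot.coe_units_iff.mp hζ)
  have htwist : ∀ i, ∀ h : H, ρ₀.twist (χ i) h = ρ' h := fun i h ↦ by
    rw [Representation.twist_apply, MonoidHom.mem_ker.mp (hχH i h.2), Units.val_one, one_smul, hρ₀]
  refine ⟨fun i ↦ ρ₀.twist (χ i), htwist, fun i j hij ⟨e, he⟩ ↦ hij (hχinj ?_).symm,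
    fun ρ hρ ↦ ?_, fun ρ τ hρ hτ ↦ ?_⟩
  · have hconj := Representation.conj_eq_self_of_forall_conj_eq hirr (e := e) fun h ↦ by
      simpa only [htwist] using (he h).symm
    ext1 g
    exact Representation.apply_eq_of_twist_apply_eq ((he g).trans (hconj _))
  · obtain ⟨χ', hχ'H, rfl⟩ := Representation.exists_eq_twist_of_restrict_eq hgen hirr hρ₀ hρ
    obtain ⟨i, rfl⟩ := hχall χ' hχ'H
    exact ⟨i, .refl ℂ V, fun g ↦ (LinearEquiv.conj_refl _).symm⟩
  · obtain ⟨χ', hχ'H, rfl⟩ := Representation.exists_eq_twist_of_restrict_eq hgen hirr hρ hτ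
    exact ⟨χ', fun h hh ↦ hχ'H hh, .refl ℂ V, fun g ↦ by rw [LinearEquiv.conj_refl]; rfl⟩
end

section
/- Let F be a global field, and for each place x of F let inv_x: Br(F_x) → ℚ/ℤ denote the local invariant. For a central division algebra D over F of dimension n², the invariant inv_x(D) is zero for all but finitely many places x, the sum of all local invariants is zero in ℚ/ℤ, and n equals the least common denominator of the local invariants inv_x(D) as x ranges over all places. -/
open scoped BigOperators

/-- Local invariants of a central division algebra over a global field.  `F` is a global
field with set of places `P`; `Br` is its Brauer group (written additively) and
`inv x : Br → ℚ/ℤ` is the local invariant at the place `x`.  The hypotheses `hfin`, `hsum`,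
`hinj` encode the fundamental exact sequence of global class field theory
`0 → Br(F) → ⊕_x ℚ/ℤ → ℚ/ℤ → 0`, and `hper` encodes the period–index theorem (the class of a
division algebra of dimension `n²` has order `n` in `Br(F)`).  Conclusion: for a central
division algebra `D/F` of dimension `n²` with class `clsD`, the invariant `inv_x(D)` vanishes
for all but finitely many `x`, the sum of all local invariants is `0`, and `n` is the least
common denominator (= lcm of the orders) of the local invariants. -/
theorem division_algebra_local_invariants
    (F : Type*) [Field F] (P : Type*)
    (Br : Type*) [AddCommGroup Br]
    (inv : P → (Br →+ AddCircle (1 : ℚ)))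
    (hfin : ∀ c : Br, {x : P | inv x c ≠ 0}.Finite)
    (hsum : ∀ c : Br, ∑ᶠ x : P, inv x c = 0)
    (hinj : ∀ c : Br, (∀ x : P, inv x c = 0) → c = 0)
    (n : ℕ) (hn : 0 < n)
    (D : Type*) [DivisionRing D] [Algebra F D] [FiniteDimensional F D]
    (hdim : Module.finrank F D = n ^ 2)
    (clsD : Br) (hper : addOrderOf clsD = n) :
    {x : P | inv x clsD ≠ 0}.Finite ∧
    (∑ᶠ x : P, inv x clsD = 0) ∧
    n = (hfin clsD).toFinset.lcm fun x => addOrderOf (inv x clsD) := by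
  refine ⟨hfin clsD, hsum clsD, ?_⟩
  set L := (hfin clsD).toFinset.lcm fun x => addOrderOf (inv x clsD) with hL
  have hnsmul : n • clsD = 0 := by
    rw [← hper]; exact addOrderOf_nsmul_eq_zero clsD
  have hLdvd : L ∣ n := by
    refine Finset.lcm_dvd fun x _ => ?_
    refine addOrderOf_dvd_of_nsmul_eq_zero ?_
    rw [← map_nsmul, hnsmul, map_zero]
  have hLsmul : L • clsD = 0 := by
    refine hinj _ fun x => ?_
    rw [map_nsmul]
    by_cases hx : inv x clsD = 0
    · rw [hx, smul_zero]
    · have hmem : x ∈ (hfin clsD).toFinset := by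
        simp [Set.Finite.mem_toFinset, hx]
      have : addOrderOf (inv x clsD) ∣ L := Finset.dvd_lcm hmem
      exact addOrderOf_dvd_iff_nsmul_eq_zero.mp this
  have hndvd : n ∣ L := by
    rw [← hper]; exact addOrderOf_dvd_of_nsmul_eq_zero hLsmul
  exact Nat.dvd_antisymm hndvd hLdvd
end
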